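/- arXiv:1410.0280 — 8 statements merged into one kernel-verified Lean document; each statement's English description precedes it below -/
import Mathlib

section
/- Let B_1,…,B_n be p×m complex matrices with F_0(z) = ∑_{j=1}^n z^{-j} B_j satisfying F_0(z)*F_0(z) = I_m for all z on the unit circle, and let H_0 be the associated np×nm block Hankel matrix. Then the matrix I_{nm} − H_0* H_0 is positive semidefinite, satisfies I_{nm} − H_0* H_0 ≤ I_{nm} (in the Loewner order), and all of its entries in the first m rows and in the first m columns vanish; that is, I_{nm} − H_0* H_0 = diag(0_{m×m}, Δ) for some (nm−m)×(nm−m) positive semidefinite matrix Δ with Δ ≤ I. -/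
open Matrix Finset ComplexOrder

/-!
Multiplying the isometry identity by `z ^ n` turns it into a polynomial identity of degree
`< 2n` on the unit circle, an infinite set, so the coefficients agree:
`∑ⱼ B_{j+1}ᴴ B_{j+d+1} = δ_{d,0} I` for `0 ≤ d < n`. These relations say precisely that
`H₀ᴴ H₀ + Tᴴ T = I`, where `T` is the strictly upper triangular block Toeplitz matrix with
blocks `B_{j-i}`: in block `(k, k + d)` the two Gram matrices contribute the parts `j ≥ k` and
`j < k` of that sum. Hence `I - H₀ᴴ H₀ = Tᴴ T ≥ 0`, `I - (I - H₀ᴴ H₀) = H₀ᴴ H₀ ≥ 0`, and the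
first block row and column of `Tᴴ T` vanish because the first block column of `T` does.
-/

theorem Finset.sum_range_ite_eq_sum_range {M : Type*} [AddCommMonoid M] {p : ℕ → Prop}
    [DecidablePred p] (f : ℕ → M) {m n : ℕ} (hmn : m ≤ n) (hp : ∀ i < n, p i ↔ i < m) :
    ∑ i ∈ range n, (if p i then f i else 0) = ∑ i ∈ range m, f i := by
  rw [← sum_filter]
  congr 1
  ext i
  simp only [mem_filter, mem_range]
  constructor
  · exact fun h => (hp i h.1).mp h.2
  · exact fun h => ⟨h.trans_le hmn, (hp i (h.trans_le hmn)).mpr h⟩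

theorem Matrix.eq_zero_of_sum_pow_smul_eq_zero_of_infinite {K ι κ : Type*} [CommRing K] [IsDomain K]
    {s : Set K} (hs : s.Infinite) {N : ℕ} {c : ℕ → Matrix ι κ K}
    (h : ∀ z ∈ s, ∑ k ∈ range N, z ^ k • c k = 0) {k : ℕ} (hk : k < N) : c k = 0 := by
  ext i j
  let q : Polynomial K := ∑ l ∈ range N, Polynomial.C (c l i j) * Polynomial.X ^ l
  have hq : q = 0 := by
    refine q.eq_zero_of_infinite_isRoot (hs.mono fun z hz => ?_)
    have hz := congr_fun₂ (h z hz) i j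
    simp only [Matrix.sum_apply, smul_apply, smul_eq_mul, zero_apply] at hz
    simp only [Set.mem_ofPred_eq, Polynomial.IsRoot, q, Polynomial.eval_finsetSum,
      Polynomial.eval_mul, Polynomial.eval_C, Polynomial.eval_pow, Polynomial.eval_X]
    simpa only [mul_comm] using hz
  simpa [q, Polynomial.finsetSum_coeff, Polynomial.coeff_C_mul_X_pow, hk] using
    congr_arg (Polynomial.coeff · k) hq

section Isometry

variable {ι κ : Type*} [Fintype ι]

theorem Complex.pow_mul_zpow_mul_star_zpow {z : ℂ} (hz : ‖z‖ = 1) {n j l : ℕ} (hl : l < n) :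
    z ^ n * (z ^ (-(l + 1 : ℤ)) * star (z ^ (-(j + 1 : ℤ)))) = z ^ (j + n - l) := by
  have hz0 : z ≠ 0 := by rintro rfl; simp at hz
  rw [star_zpow₀, Complex.star_def, ← Complex.inv_eq_conj hz, _root_.inv_zpow', neg_neg,
    ← zpow_natCast, ← zpow_natCast, ← zpow_add₀ hz0, ← zpow_add₀ hz0]
  congr 1
  omega

theorem pow_smul_conjTranspose_mul_eq_sum {z : ℂ} (hz : ‖z‖ = 1) (n : ℕ)
    (B : ℕ → Matrix ι κ ℂ) :
    z ^ n • ((∑ j ∈ range n, z ^ (-(j + 1 : ℤ)) • B (j + 1))ᴴ *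
        ∑ l ∈ range n, z ^ (-(l + 1 : ℤ)) • B (l + 1)) =
      ∑ j ∈ range n, ∑ l ∈ range n, z ^ (j + n - l) • ((B (j + 1))ᴴ * B (l + 1)) := by
  simp only [conjTranspose_sum, conjTranspose_smul, Matrix.sum_mul, Matrix.mul_sum,
    Matrix.smul_mul, Matrix.mul_smul, Finset.smul_sum, smul_smul]
  rw [sum_comm]
  refine sum_congr rfl fun j _ => sum_congr rfl fun l hl => ?_
  rw [Complex.pow_mul_zpow_mul_star_zpow hz (mem_range.mp hl)]

variable [DecidableEq κ]

theorem sum_conjTranspose_mul_shift_eq_of_isometry {n : ℕ} {B : ℕ → Matrix ι κ ℂ}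
    (hiso : ∀ z : ℂ, ‖z‖ = 1 →
      (∑ j ∈ range n, z ^ (-(j + 1 : ℤ)) • B (j + 1))ᴴ *
        (∑ j ∈ range n, z ^ (-(j + 1 : ℤ)) • B (j + 1)) = 1)
    {d : ℕ} (hd : d < n) :
    ∑ j ∈ range (n - d), (B (j + 1))ᴴ * B (j + d + 1) = if d = 0 then 1 else 0 := by
  set X : ℕ → ℕ → Matrix κ κ ℂ := fun j l => (B (j + 1))ᴴ * B (l + 1)
  -- `c k` is the coefficient of `z ^ k` in `z ^ n • (F(z)ᴴ F(z) - 1)`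
  set c : ℕ → Matrix κ κ ℂ := fun k =>
    (∑ j ∈ range n, ∑ l ∈ range n, if j + n - l = k then X j l else 0) - if k = n then 1 else 0
  have hsphere : (Metric.sphere (0 : ℂ) 1).Infinite :=
    (isConnected_sphere (by simp [Complex.rank_real_complex]) 0 zero_le_one).isPreconnected
      |>.infinite_of_nontrivial ⟨1, by simp, -1, by simp, by norm_num⟩
  have hc : c (n - d) = 0 := by
    refine Matrix.eq_zero_of_sum_pow_smul_eq_zero_of_infinite hsphere (N := 2 * n)
      (fun z hz => ?_) (by omega)
    rw [mem_sphere_zero_iff_norm] at hz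
    have hX : ∑ k ∈ range (2 * n), z ^ k •
        ∑ j ∈ range n, ∑ l ∈ range n, (if j + n - l = k then X j l else 0) =
        ∑ j ∈ range n, ∑ l ∈ range n, z ^ (j + n - l) • X j l := by
      simp only [smul_sum, smul_ite, smul_zero]
      rw [sum_comm]
      refine sum_congr rfl fun j hj => ?_
      rw [sum_comm]
      refine sum_congr rfl fun l _ => ?_
      rw [sum_ite_eq, if_pos (by simp only [mem_range] at hj ⊢; omega)]
    have hone : ∑ k ∈ range (2 * n), z ^ k • (if k = n then 1 else 0 : Matrix κ κ ℂ) =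
        z ^ n • 1 := by
      simp only [smul_ite, smul_zero]
      rw [sum_ite_eq', if_pos (by simp only [mem_range]; omega)]
    simp only [c, smul_sub, sum_sub_distrib, hX, hone, X,
      ← pow_smul_conjTranspose_mul_eq_sum hz, hiso z hz, sub_self]
  have hdiag : ∀ j, ∑ l ∈ range n, (if j + n - l = n - d then X j l else 0) =
      if j + d < n then X j (j + d) else 0 := by
    intro j
    rw [sum_congr rfl fun l hl =>
      if_congr (show j + n - l = n - d ↔ j + d = l by rw [mem_range] at hl; omega) rfl rfl,
      sum_ite_eq]
    exact if_congr mem_range rfl rfl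
  rw [sub_eq_zero, sum_congr rfl fun j _ => hdiag j,
    sum_range_ite_eq_sum_range _ (Nat.sub_le n d) fun j _ => by omega] at hc
  exact hc.trans (if_congr (by omega) rfl rfl)

end Isometry

namespace Matrix

variable {R ι κ : Type*} [Semiring R] [StarRing R] [Fintype ι]

theorem conjTranspose_mul_apply_prod {ν ν' κ' : Type*} [Fintype ν]
    (M : Matrix (ν × ι) (ν' × κ) R) (N : Matrix (ν × ι) (ν' × κ') R)
    (k : ν') (b : κ) (k' : ν') (c : κ') :
    (Mᴴ * N) (k, b) (k', c) =
      (∑ i, (of fun a b => M (i, a) (k, b))ᴴ * of fun a c => N (i, a) (k', c)) b c := by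
  simp [mul_apply, Fintype.sum_prod_type, Matrix.sum_apply]

def blockHankel (n : ℕ) (B : ℕ → Matrix ι κ R) : Matrix (Fin n × ι) (Fin n × κ) R :=
  of fun x y => if (x.1 : ℕ) + y.1 < n then B (x.1 + y.1 + 1) x.2 y.2 else 0

def strictUpperBlockToeplitz (n : ℕ) (B : ℕ → Matrix ι κ R) :
    Matrix (Fin n × ι) (Fin n × κ) R :=
  of fun x y => if (x.1 : ℕ) < y.1 then B (y.1 - x.1) x.2 y.2 else 0

variable {n : ℕ} (B : ℕ → Matrix ι κ R)

theorem blockHankel_gram_apply {k k' : Fin n} {d : ℕ} (hd : (k' : ℕ) = k + d) (b c : κ) :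
    ((blockHankel n B)ᴴ * blockHankel n B) (k, b) (k', c) =
      (∑ j ∈ Ico (k : ℕ) (n - d), (B (j + 1))ᴴ * B (j + d + 1)) b c := by
  have hblock : ∀ i l : Fin n, (of fun a b => blockHankel n B (i, a) (l, b)) =
      if (i : ℕ) + l < n then B (i + l + 1) else 0 := by
    intro i l
    ext a b
    simp only [blockHankel, of_apply]
    split_ifs <;> rfl
  rw [conjTranspose_mul_apply_prod, sum_Ico_eq_sum_range, show n - d - k = n - k' by omega,
    ← sum_range_ite_eq_sum_range (p := fun i => i + k' < n) _ (Nat.sub_le n k')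
      (fun i _ => by omega),
    ← Fin.sum_univ_eq_sum_range]
  refine congrArg (fun M : Matrix κ κ R => M b c) (sum_congr rfl fun i _ => ?_)
  rw [hblock, hblock]
  split_ifs
  · rw [hd]; ring_nf
  · rw [Matrix.mul_zero]
  · omega
  · rw [Matrix.mul_zero]

theorem strictUpperBlockToeplitz_gram_apply {k k' : Fin n} {d : ℕ} (hd : (k' : ℕ) = k + d)
    (b c : κ) :
    ((strictUpperBlockToeplitz n B)ᴴ * strictUpperBlockToeplitz n B) (k, b) (k', c) =
      (∑ j ∈ range k, (B (j + 1))ᴴ * B (j + d + 1)) b c := by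
  have hblock : ∀ s l : Fin n, (of fun a b => strictUpperBlockToeplitz n B (s, a) (l, b)) =
      if (s : ℕ) < l then B (l - s) else 0 := by
    intro s l
    ext a b
    simp only [strictUpperBlockToeplitz, of_apply]
    split_ifs <;> rfl
  rw [conjTranspose_mul_apply_prod, ← sum_range_reflect,
    ← sum_range_ite_eq_sum_range (p := fun s => s < k) _ k.isLt.le (fun s _ => Iff.rfl),
    ← Fin.sum_univ_eq_sum_range]
  refine congrArg (fun M : Matrix κ κ R => M b c) (sum_congr rfl fun s _ => ?_)
  rw [hblock, hblock]
  split_ifs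
  · congr 3 <;> omega
  · omega
  · rw [conjTranspose_zero, Matrix.zero_mul]
  · rw [conjTranspose_zero, Matrix.zero_mul]

theorem strictUpperBlockToeplitz_gram_apply_eq_zero {k k' : Fin n}
    (h : (k : ℕ) = 0 ∨ (k' : ℕ) = 0) (b c : κ) :
    ((strictUpperBlockToeplitz n B)ᴴ * strictUpperBlockToeplitz n B) (k, b) (k', c) = 0 := by
  have hcol : ∀ x (l : Fin n) (a : κ), (l : ℕ) = 0 →
      strictUpperBlockToeplitz n B x (l, a) = 0 := by
    intro x l a hl
    simp only [strictUpperBlockToeplitz, of_apply, hl, Nat.not_lt_zero, if_false]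
  rw [mul_apply]
  refine sum_eq_zero fun x _ => ?_
  rcases h with h | h
  · rw [conjTranspose_apply, hcol x k b h, star_zero, zero_mul]
  · rw [hcol x k' c h, mul_zero]

theorem blockHankel_gram_add_strictUpperBlockToeplitz_gram [DecidableEq κ]
    (hrel : ∀ d < n,
      ∑ j ∈ range (n - d), (B (j + 1))ᴴ * B (j + d + 1) = if d = 0 then 1 else 0) :
    (blockHankel n B)ᴴ * blockHankel n B +
      (strictUpperBlockToeplitz n B)ᴴ * strictUpperBlockToeplitz n B = 1 := by
  set G := (blockHankel n B)ᴴ * blockHankel n B +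
    (strictUpperBlockToeplitz n B)ᴴ * strictUpperBlockToeplitz n B with hG_def
  have hupper : ∀ (k k' : Fin n) (b c : κ), (k : ℕ) ≤ k' →
      G (k, b) (k', c) = (1 : Matrix _ _ R) (k, b) (k', c) := by
    intro k k' b c hle
    obtain ⟨d, hd⟩ := Nat.exists_eq_add_of_le hle
    rw [hG_def, add_apply, blockHankel_gram_apply B hd, strictUpperBlockToeplitz_gram_apply B hd,
      ← add_apply, add_comm, sum_range_add_sum_Ico _ (by omega), hrel d (by omega)]
    rcases eq_or_ne d 0 with rfl | hd0
    · obtain rfl : k = k' := Fin.ext hd.symm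
      simp [one_apply]
    · have hkk : k ≠ k' := fun h => hd0 (by omega)
      simp [hd0, hkk]
  have hG : G.IsHermitian :=
    (isHermitian_conjTranspose_mul_self _).add (isHermitian_conjTranspose_mul_self _)
  ext ⟨k, b⟩ ⟨k', c⟩
  rcases le_total (k : ℕ) k' with h | h
  · exact hupper k k' b c h
  · rw [← hG.apply, hupper k' k c b h, isHermitian_one.apply]

end Matrix

/-- If `F₀(z) = ∑_{j=1}^n z^{-j} B_j` is isometric on the unit circle,
then `I - H₀ᴴ H₀` is positive semidefinite, bounded above by `I` in the Loewner
order, and its entries vanish on the first `m` rows and first `m` columns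
(i.e. it has the form `diag(0_{m×m}, Δ)` with `0 ≤ Δ ≤ I`). -/
theorem fir_isometry_hankel_structure
    (p m n : ℕ) (B : ℕ → Matrix (Fin p) (Fin m) ℂ)
    (H₀ : Matrix (Fin n × Fin p) (Fin n × Fin m) ℂ)
    (hH₀ : ∀ (i j : Fin n) (a : Fin p) (b : Fin m),
      H₀ (i, a) (j, b) = if i.val + j.val + 1 ≤ n then B (i.val + j.val + 1) a b else 0)
    (hiso : ∀ z : ℂ, ‖z‖ = 1 →
      (∑ j ∈ Finset.range n, z ^ (-(j + 1 : ℤ)) • B (j + 1))ᴴ *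
        (∑ j ∈ Finset.range n, z ^ (-(j + 1 : ℤ)) • B (j + 1)) = 1) :
    (1 - H₀ᴴ * H₀).PosSemidef ∧
    (1 - (1 - H₀ᴴ * H₀)).PosSemidef ∧
    (∀ (j k : Fin n) (b c : Fin m), (j.val = 0 ∨ k.val = 0) →
      ((1 - H₀ᴴ * H₀ : Matrix (Fin n × Fin m) (Fin n × Fin m) ℂ) (j, b)) (k, c) = 0) := by
  obtain rfl : H₀ = blockHankel n B := by
    ext ⟨i, a⟩ ⟨j, b⟩
    rw [hH₀]
    simp only [blockHankel, of_apply, Nat.lt_iff_add_one_le]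
  have hdefect : 1 - (blockHankel n B)ᴴ * blockHankel n B =
      (strictUpperBlockToeplitz n B)ᴴ * strictUpperBlockToeplitz n B := by
    rw [← blockHankel_gram_add_strictUpperBlockToeplitz_gram B
      fun d hd => sum_conjTranspose_mul_shift_eq_of_isometry hiso hd, add_sub_cancel_left]
  refine ⟨?_, ?_, ?_⟩
  · rw [hdefect]
    exact posSemidef_conjTranspose_mul_self _
  · rw [sub_sub_cancel]
    exact posSemidef_conjTranspose_mul_self _
  · intro j k b c h
    rw [hdefect]
    exact strictUpperBlockToeplitz_gram_apply_eq_zero B h b c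
end

section
/- Let B_1,…,B_n be p×p complex matrices (square case m = p) with F_0(z) = ∑_{j=1}^n z^{-j} B_j unitary for all z on the unit circle (F_0(z)*F_0(z) = I_p = F_0(z)F_0(z)*), and let H_0 be the associated np×np block Hankel matrix. Then I_{np} − H_0* H_0 is an orthogonal projection: it is Hermitian and (I_{np} − H_0* H_0)² = I_{np} − H_0* H_0. -/
/-!
Extend the taps by zero to `b : ℤ → Mₚ(ℂ)`. Comparing Fourier coefficients on the unit circle,
unitarity of `F₀` says `∑ᵤ b(u)ᴴ b(u+d) = δ_d = ∑ᵤ b(u) b(u+d)ᴴ`. For the block Toeplitz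
matrices `T = (b(k-i))ᵢₖ` and `L = (b(n+k-i))ᵢₖ` these correlations give
`TᴴT + H₀ᴴH₀ = 1`, `TTᴴ + LLᴴ = 1` and `LᴴT = 0`; hence `1 - H₀ᴴH₀ = TᴴT` and
`(TᴴT)² = Tᴴ(1 - LLᴴ)T = TᴴT`.
-/

open Matrix Finset
open scoped Pointwise

theorem Complex.infinite_setOf_norm_eq_one : {z : ℂ | ‖z‖ = 1}.Infinite := by
  have hsphere : {z : ℂ | ‖z‖ = 1} = Metric.sphere 0 1 := by ext; simp
  rw [hsphere]
  refine (isPreconnected_sphere ?_ 0 1).infinite_of_nontrivial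
    ⟨1, by simp, -1, by simp, by norm_num⟩
  rw [Complex.rank_real_complex]
  norm_num

open Polynomial in
theorem Complex.eq_zero_of_sum_zpow_mul_eq_zero {s : Finset ℤ} {a : ℤ → ℂ}
    (h : ∀ z : ℂ, ‖z‖ = 1 → ∑ d ∈ s, z ^ d * a d = 0) {d : ℤ} (hd : d ∈ s) : a d = 0 := by
  obtain ⟨N, hN⟩ : ∃ N : ℕ, ∀ d ∈ s, 0 ≤ d + N := by
    obtain ⟨m, hm⟩ := s.bddBelow
    exact ⟨(-m).toNat, fun d hd => by have := hm hd; omega⟩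
  let e : ℤ → ℕ := fun d => (d + N).toNat
  have he : ∀ d ∈ s, ∀ d' ∈ s, e d = e d' → d = d' := fun d hd d' hd' hde => by
    have := hN d hd; have := hN d' hd'; simp only [e] at hde; omega
  -- `z ^ N * ∑ z ^ d * a d` is a polynomial vanishing on the circle
  set P : ℂ[X] := ∑ d ∈ s, C (a d) * X ^ e d
  have hP : P = 0 := by
    refine eq_zero_of_infinite_isRoot P (Complex.infinite_setOf_norm_eq_one.mono fun z hz => ?_)
    have hz0 : z ≠ 0 := by rintro rfl; simp at hz
    have : P.eval z = z ^ N * ∑ d ∈ s, z ^ d * a d := by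
      simp only [P, eval_finsetSum, eval_mul, eval_C, eval_pow, eval_X, mul_sum]
      refine sum_congr rfl fun d hd => ?_
      rw [← zpow_natCast, ← zpow_natCast, ← mul_assoc, ← zpow_add₀ hz0]
      simp only [e, Int.toNat_of_nonneg (hN d hd)]
      ring_nf
    simp [IsRoot, this, h z hz]
  have := congrArg (coeff · (e d)) hP
  simp only [P, finsetSum_coeff, coeff_C_mul_X_pow, coeff_zero] at this
  rwa [sum_eq_single_of_mem d hd (fun d' hd' hne => if_neg fun h => hne (he _ hd' _ hd h.symm)),
    if_pos rfl] at this

theorem Complex.eq_zero_of_sum_zpow_smul_eq_zero {V : Type*} [AddCommGroup V] [Module ℂ V]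
    {s : Finset ℤ} {c : ℤ → V} (h : ∀ z : ℂ, ‖z‖ = 1 → ∑ d ∈ s, z ^ d • c d = 0)
    {d : ℤ} (hd : d ∈ s) : c d = 0 := by
  refine (Module.forall_dual_apply_eq_zero_iff ℂ (c d)).mp fun f => ?_
  refine Complex.eq_zero_of_sum_zpow_mul_eq_zero (a := fun d => f (c d)) (fun z hz => ?_) hd
  simpa using congrArg f (h z hz)

section Laurent

variable {A : Type*} [Ring A] [Algebra ℂ A]

noncomputable def laurentSum (I : Finset ℤ) (a : ℤ → A) (z : ℂ) : A :=
  ∑ u ∈ I, z ^ u • a u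

theorem star_laurentSum [StarRing A] [StarModule ℂ A] (I : Finset ℤ) (a : ℤ → A) (z : ℂ) :
    star (laurentSum I a z) = laurentSum I (star a) (star z) := by
  simp [laurentSum, star_sum, star_smul, star_zpow₀]

theorem laurentSum_inv_mul_laurentSum {I D : Finset ℤ} (hD : I - I ⊆ D) (a : ℤ → A)
    {c : ℤ → A} (hc : ∀ u ∉ I, c u = 0) {z : ℂ} (hz : z ≠ 0) :
    laurentSum I a z⁻¹ * laurentSum I c z = ∑ d ∈ D, z ^ d • ∑ u ∈ I, a u * c (u + d) := by
  have hrow : ∀ u ∈ I, ∑ v ∈ I, z ^ (v - u) • (a u * c v) =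
      ∑ d ∈ D, z ^ d • (a u * c (u + d)) := fun u hu => by
    have hsub : I.image (· - u) ⊆ D := image_subset_iff.mpr fun v hv => hD (sub_mem_sub hv hu)
    rw [← sum_subset hsub fun d _ hd => ?_, sum_image fun v _ w _ => sub_left_inj.mp]
    · simp
    · rw [hc _ fun h => hd (mem_image.mpr ⟨u + d, h, by ring⟩), mul_zero, smul_zero]
  calc laurentSum I a z⁻¹ * laurentSum I c z
      = ∑ u ∈ I, ∑ v ∈ I, z ^ (v - u) • (a u * c v) := by
        simp only [laurentSum, sum_mul_sum, smul_mul_smul, _root_.inv_zpow', ← zpow_add₀ hz]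
        simp [sub_eq_add_neg, add_comm]
    _ = ∑ d ∈ D, z ^ d • ∑ u ∈ I, a u * c (u + d) := by
        rw [sum_congr rfl hrow, sum_comm]
        simp only [smul_sum]

theorem sum_mul_add_eq_ite_of_laurentSum_inv_mul_eq_one {I : Finset ℤ} {a c : ℤ → A}
    (hc : ∀ u ∉ I, c u = 0)
    (h : ∀ z : ℂ, ‖z‖ = 1 → laurentSum I a z⁻¹ * laurentSum I c z = 1) (d : ℤ) :
    ∑ u ∈ I, a u * c (u + d) = if d = 0 then 1 else 0 := by
  -- lags: the one asked about, the constant term, and all lags where the product can be nonzero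
  set D := insert d (insert 0 (I - I))
  refine sub_eq_zero.mp <| Complex.eq_zero_of_sum_zpow_smul_eq_zero (s := D)
    (c := fun d => ∑ u ∈ I, a u * c (u + d) - if d = 0 then 1 else 0) (fun z hz => ?_)
    (mem_insert_self d _)
  have hz0 : z ≠ 0 := by rintro rfl; simp at hz
  have hD : I - I ⊆ D := (subset_insert _ _).trans (subset_insert _ _)
  simp only [smul_sub, sum_sub_distrib, smul_ite, smul_zero, sum_ite_eq', zpow_zero, one_smul]
  rw [← laurentSum_inv_mul_laurentSum hD a hc hz0, h z hz, if_pos (by simp [D]), sub_self]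

end Laurent

section Taps

variable {M : Type*} [Zero M]

def firTaps (n : ℕ) (B : ℕ → M) (u : ℤ) : M :=
  if 1 ≤ u ∧ u ≤ n then B u.toNat else 0

theorem firTaps_eq_zero {n : ℕ} (B : ℕ → M) {u : ℤ} (hu : u ∉ Icc 1 (n : ℤ)) :
    firTaps n B u = 0 :=
  if_neg (by simpa using hu)

theorem firTaps_natCast_add_one (n : ℕ) (B : ℕ → M) (k : ℕ) :
    firTaps n B (k + 1) = if k + 1 ≤ n then B (k + 1) else 0 := by
  simp only [firTaps]
  exact if_congr (by omega) (by congr 1) rfl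

theorem sum_range_zpow_neg_smul_eq_laurentSum {A : Type*} [Ring A] [Algebra ℂ A] (n : ℕ)
    (B : ℕ → A) (z : ℂ) :
    ∑ j ∈ range n, z ^ (-(j + 1 : ℤ)) • B (j + 1) =
      laurentSum (Icc 1 (n : ℤ)) (firTaps n B) z⁻¹ := by
  rw [laurentSum, Int.Icc_eq_finset_map, sum_map, add_sub_cancel_right, Int.toNat_natCast]
  refine sum_congr rfl fun k hk => ?_
  simp only [Function.Embedding.trans_apply, Nat.castEmbedding_apply, addLeftEmbedding_apply]
  rw [add_comm (1 : ℤ), firTaps_natCast_add_one, if_pos (by simpa using hk), _root_.inv_zpow']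

end Taps

section Window

variable {M : Type*} [AddCommMonoid M]

theorem Fin.sum_univ_intCast_add (n : ℕ) (g : ℤ → M) (c : ℤ) :
    ∑ k : Fin n, g (c + k) = ∑ u ∈ Ico c (c + n), g u := by
  rw [Int.Ico_eq_finset_map, sum_map, add_sub_cancel_left, Int.toNat_natCast,
    ← Fin.sum_univ_eq_sum_range]
  rfl

theorem Fin.sum_univ_sub_eq_sum_univ_add (n : ℕ) (g : ℤ → M) (c : ℤ) :
    ∑ k : Fin n, g (c - k) = ∑ k : Fin n, g (c + 1 - n + k) :=
  Fintype.sum_equiv Fin.revPerm _ _ fun k => by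
    have := k.isLt
    simp only [Fin.revPerm_apply, Fin.val_rev]
    congr 1
    omega

theorem Fin.sum_univ_add_add_sum_univ_add_eq_sum_Icc {n : ℕ} {g : ℤ → M}
    (hg : ∀ u ∉ Icc (1 : ℤ) n, g u = 0) {c : ℤ} (hc₁ : c ≤ 1) (hc₂ : 1 ≤ c + n) :
    ∑ k : Fin n, g (c + k) + ∑ k : Fin n, g (c + n + k) = ∑ u ∈ Icc 1 (n : ℤ), g u := by
  rw [Fin.sum_univ_intCast_add, Fin.sum_univ_intCast_add,
    ← sum_union (Ico_disjoint_Ico_consecutive _ _ _), Ico_union_Ico_eq_Ico (by omega) (by omega)]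
  refine (sum_subset (fun u hu => ?_) fun u _ hu => hg u hu).symm
  simp only [mem_Icc, mem_Ico] at hu ⊢
  omega

end Window

namespace Matrix

variable {A : Type*}

def toeplitz (n : ℕ) (s : ℤ) (b : ℤ → A) : Matrix (Fin n) (Fin n) A :=
  of fun i k => b (s + k - i)

def hankel (n : ℕ) (b : ℤ → A) : Matrix (Fin n) (Fin n) A :=
  of fun i k => b (i + k + 1)

section Correlation

variable [Ring A] [StarRing A] {n : ℕ} {b : ℤ → A} (hb : ∀ u ∉ Icc (1 : ℤ) n, b u = 0)
include hb

theorem star_toeplitz_mul_add_star_hankel_mul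
    (hcorr : ∀ d, ∑ u ∈ Icc 1 (n : ℤ), star (b u) * b (u + d) = if d = 0 then 1 else 0) :
    star (toeplitz n 0 b) * toeplitz n 0 b + star (hankel n b) * hankel n b = 1 := by
  ext i j
  set g : ℤ → A := fun u => star (b u) * b (u + (j - i))
  have hg : ∀ u ∉ Icc (1 : ℤ) n, g u = 0 := fun u hu => by simp [g, hb u hu]
  calc (star (toeplitz n 0 b) * toeplitz n 0 b + star (hankel n b) * hankel n b) i j
      = ∑ k : Fin n, g (i - k) + ∑ k : Fin n, g (i + 1 + k) := by
        simp only [add_apply, mul_apply, star_apply, toeplitz, hankel, of_apply, g]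
        congr 1 <;> refine sum_congr rfl fun k _ => ?_ <;> ring_nf
    _ = ∑ u ∈ Icc 1 (n : ℤ), g u := by
        rw [Fin.sum_univ_sub_eq_sum_univ_add, ← Fin.sum_univ_add_add_sum_univ_add_eq_sum_Icc hg
          (c := i + 1 - n) (by omega) (by omega)]
        ring_nf
    _ = (1 : Matrix (Fin n) (Fin n) A) i j := by
        rw [hcorr, one_apply]
        exact if_congr (by rw [Fin.ext_iff]; omega) rfl rfl

theorem toeplitz_mul_star_add_toeplitz_mul_star
    (hcorr : ∀ d, ∑ u ∈ Icc 1 (n : ℤ), b u * star (b (u + d)) = if d = 0 then 1 else 0) :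
    toeplitz n 0 b * star (toeplitz n 0 b) + toeplitz n n b * star (toeplitz n n b) = 1 := by
  ext i j
  set g : ℤ → A := fun u => b u * star (b (u + (i - j)))
  have hg : ∀ u ∉ Icc (1 : ℤ) n, g u = 0 := fun u hu => by simp [g, hb u hu]
  calc (toeplitz n 0 b * star (toeplitz n 0 b) + toeplitz n n b * star (toeplitz n n b)) i j
      = ∑ k : Fin n, g (-i + k) + ∑ k : Fin n, g (-i + n + k) := by
        simp only [add_apply, mul_apply, star_apply, toeplitz, of_apply, g]
        congr 1 <;> refine sum_congr rfl fun k _ => ?_ <;> ring_nf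
    _ = ∑ u ∈ Icc 1 (n : ℤ), g u :=
        Fin.sum_univ_add_add_sum_univ_add_eq_sum_Icc hg (by omega) (by omega)
    _ = (1 : Matrix (Fin n) (Fin n) A) i j := by
        rw [hcorr, one_apply]
        exact if_congr (by rw [Fin.ext_iff]; omega) rfl rfl

theorem star_toeplitz_mul_toeplitz_eq_zero
    (hcorr : ∀ d, ∑ u ∈ Icc 1 (n : ℤ), star (b u) * b (u + d) = if d = 0 then 1 else 0) :
    star (toeplitz n n b) * toeplitz n 0 b = 0 := by
  ext i j
  set g : ℤ → A := fun u => star (b u) * b (u + (j - i - n))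
  have hg : ∀ u ∉ Icc (1 : ℤ) n, g u = 0 := fun u hu => by simp [g, hb u hu]
  have hg_le : ∀ k : Fin n, g (i + 1 - n + k) = 0 := fun k =>
    mul_eq_zero_of_right _ (hb _ (by simp only [mem_Icc]; omega))
  calc (star (toeplitz n n b) * toeplitz n 0 b) i j
      = ∑ k : Fin n, g (n + i - k) := by
        simp only [mul_apply, star_apply, toeplitz, of_apply, g]
        refine sum_congr rfl fun k _ => ?_
        ring_nf
    _ = ∑ k : Fin n, g (i + 1 - n + k) + ∑ k : Fin n, g (i + 1 - n + n + k) := by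
        rw [Fin.sum_univ_sub_eq_sum_univ_add]
        simp only [hg_le, sum_const_zero, zero_add]
        ring_nf
    _ = ∑ u ∈ Icc 1 (n : ℤ), g u :=
        Fin.sum_univ_add_add_sum_univ_add_eq_sum_Icc hg (by omega) (by omega)
    _ = 0 := by rw [hcorr, if_neg (by omega)]

end Correlation

def compStarRingEquiv (I J R : Type*) [AddCommMonoid R] [Mul R] [Star R] [Fintype I]
    [Fintype J] : Matrix I I (Matrix J J R) ≃⋆+* Matrix (I × J) (I × J) R :=
  { compRingEquiv I J R with map_star' := fun _ => rfl }

end Matrix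

theorem isStarProjection_one_sub_star_mul_self {R : Type*} [Ring R] [StarRing R] {T H L : R}
    (hTH : star T * T + star H * H = 1) (hTL : T * star T + L * star L = 1)
    (hLT : star L * T = 0) : IsStarProjection (1 - star H * H) := by
  rw [← hTH, add_sub_cancel_right]
  refine ⟨?_, .star_mul_self T⟩
  calc star T * T * (star T * T) = star T * (T * star T) * T := by simp only [mul_assoc]
    _ = star T * (1 - L * star L) * T := by rw [← hTL, add_sub_cancel_right]
    _ = star T * T - star (star L * T) * (star L * T) := by
        simp only [star_mul, star_star, mul_sub, sub_mul, mul_one, mul_assoc]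
    _ = star T * T := by rw [hLT, mul_zero, sub_zero]

/-- In the square case, if `F₀(z) = ∑_{j=1}^n z^{-j} B_j` is unitary on
the unit circle, then `I - H₀ᴴ H₀` is an orthogonal projection (Hermitian idempotent). -/
theorem fir_unitary_hankel_projection
    (p n : ℕ) (B : ℕ → Matrix (Fin p) (Fin p) ℂ)
    (H₀ : Matrix (Fin n × Fin p) (Fin n × Fin p) ℂ)
    (hH₀ : ∀ (i j : Fin n) (a b : Fin p),
      H₀ (i, a) (j, b) = if i.val + j.val + 1 ≤ n then B (i.val + j.val + 1) a b else 0)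
    (hiso : ∀ z : ℂ, ‖z‖ = 1 →
      (∑ j ∈ Finset.range n, z ^ (-(j + 1 : ℤ)) • B (j + 1))ᴴ *
        (∑ j ∈ Finset.range n, z ^ (-(j + 1 : ℤ)) • B (j + 1)) = 1)
    (hcoiso : ∀ z : ℂ, ‖z‖ = 1 →
      (∑ j ∈ Finset.range n, z ^ (-(j + 1 : ℤ)) • B (j + 1)) *
        (∑ j ∈ Finset.range n, z ^ (-(j + 1 : ℤ)) • B (j + 1))ᴴ = 1) :
    (1 - H₀ᴴ * H₀)ᴴ = 1 - H₀ᴴ * H₀ ∧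
    (1 - H₀ᴴ * H₀) * (1 - H₀ᴴ * H₀) = 1 - H₀ᴴ * H₀ := by
  set b := firTaps n B
  set I := Icc 1 (n : ℤ)
  have hb : ∀ u ∉ I, b u = 0 := fun u hu => firTaps_eq_zero B hu
  have hb_star : ∀ u ∉ I, star b u = 0 := fun u hu => by simp [hb u hu]
  have hstar : ∀ z : ℂ, ‖z‖ = 1 → (laurentSum I b z)ᴴ = laurentSum I (star b) z⁻¹ := fun z hz => by
    rw [← star_eq_conjTranspose, star_laurentSum, Complex.star_def, Complex.inv_eq_conj hz]
  have hC := sum_mul_add_eq_ite_of_laurentSum_inv_mul_eq_one hb fun z hz => by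
    have := hiso z⁻¹ (by simp [hz])
    rwa [sum_range_zpow_neg_smul_eq_laurentSum, inv_inv, hstar z hz] at this
  have hD := sum_mul_add_eq_ite_of_laurentSum_inv_mul_eq_one hb_star fun z hz => by
    have := hcoiso z hz
    rwa [sum_range_zpow_neg_smul_eq_laurentSum, hstar z⁻¹ (by simp [hz]), inv_inv] at this
  have hH : H₀ = compStarRingEquiv (Fin n) (Fin p) ℂ (hankel n b) := by
    ext ⟨i, a⟩ ⟨j, c⟩
    change _ = firTaps n B ((i : ℕ) + (j : ℕ) + 1 : ℤ) a c
    rw [hH₀, ← Nat.cast_add, firTaps_natCast_add_one]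
    split_ifs <;> rfl
  have hproj := (isStarProjection_one_sub_star_mul_self
    (star_toeplitz_mul_add_star_hankel_mul hb hC) (toeplitz_mul_star_add_toeplitz_mul_star hb hD)
    (star_toeplitz_mul_toeplitz_eq_zero hb hC)).map (compStarRingEquiv (Fin n) (Fin p) ℂ)
  rw [map_sub, map_one, map_mul, map_star, ← hH] at hproj
  exact ⟨hproj.isSelfAdjoint, hproj.isIdempotentElem⟩
end

section
/- Let A be ν×ν, B be ν×m, C be p×ν and D be p×m complex matrices, and let R be the (ν+p)×(ν+m) block matrix R = [[A, B], [C, D]]. Assume R* R = I_{ν+m}. Then for every z on the unit circle 𝕋 such that z·I_ν − A is invertible, the matrix F(z) = C (z·I_ν − A)^{-1} B + D satisfies F(z)* F(z) = I_m. -/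
open Matrix

/-!
Put `G = (zI - A)⁻¹ B`, so that `A G + B = z G` and `C G + D = F(z)`: the block matrix `R`
maps the stacked matrix `[G; I]` to `[z G; F(z)]`. Since `R` is an isometry, both have the same
Gram matrix, `Gᴴ G + I = |z|² Gᴴ G + F(z)ᴴ F(z)`, and `|z| = 1` leaves `F(z)ᴴ F(z) = I`.
-/

namespace Matrix

variable {𝕜 : Type*} {l m n p : Type*}

lemma conjTranspose_fromRows_mul_fromRows [Fintype m] [Fintype p] [Semiring 𝕜] [StarRing 𝕜]
    (X : Matrix m n 𝕜) (Y : Matrix p n 𝕜) :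
    (fromRows X Y)ᴴ * fromRows X Y = Xᴴ * X + Yᴴ * Y := by
  rw [conjTranspose_fromRows_eq_fromCols_conjTranspose, fromCols_mul_fromRows]

lemma conjTranspose_mul_mul_self_of_isometry [Fintype m] [Fintype n] [DecidableEq n]
    [Semiring 𝕜] [StarRing 𝕜]
    {R : Matrix m n 𝕜} (hR : Rᴴ * R = 1) (X : Matrix n l 𝕜) :
    (R * X)ᴴ * (R * X) = Xᴴ * X := by
  rw [conjTranspose_mul, Matrix.mul_assoc, ← Matrix.mul_assoc Rᴴ, hR, Matrix.one_mul]

lemma mul_resolvent_mul_add [Fintype n] [DecidableEq n] [CommRing 𝕜]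
    {A : Matrix n n 𝕜} {z : 𝕜} (hzA : IsUnit (z • (1 : Matrix n n 𝕜) - A))
    (B : Matrix n m 𝕜) :
    A * ((z • 1 - A)⁻¹ * B) + B = z • ((z • 1 - A)⁻¹ * B) := by
  have h : (z • 1 - A) * (z • 1 - A)⁻¹ = 1 :=
    mul_nonsing_inv _ ((isUnit_iff_isUnit_det _).mp hzA)
  rw [Matrix.sub_mul, Matrix.smul_mul, Matrix.one_mul, sub_eq_iff_eq_add] at h
  rw [← Matrix.mul_assoc, ← Matrix.smul_mul, h, Matrix.add_mul, Matrix.one_mul, add_comm]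

lemma conjTranspose_mul_self_eq_one_of_fromBlocks [Fintype l] [Fintype m] [Fintype n]
    [DecidableEq l] [DecidableEq m] [CommRing 𝕜] [StarRing 𝕜]
    {A : Matrix l l 𝕜} {B : Matrix l m 𝕜} {C : Matrix n l 𝕜} {D : Matrix n m 𝕜}
    (hR : (fromBlocks A B C D)ᴴ * fromBlocks A B C D = 1) {z : 𝕜} (hz : star z * z = 1)
    {G : Matrix l m 𝕜} (hG : A * G + B = z • G) :
    (C * G + D)ᴴ * (C * G + D) = 1 := by
  let X : Matrix (l ⊕ m) m 𝕜 := fromRows G 1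
  have hmap : fromBlocks A B C D * X = fromRows (z • G) (C * G + D) := by
    rw [fromBlocks_mul_fromRows, Matrix.mul_one, Matrix.mul_one, hG]
  have hgram := conjTranspose_mul_mul_self_of_isometry hR X
  rw [hmap, conjTranspose_fromRows_mul_fromRows, conjTranspose_fromRows_mul_fromRows,
    conjTranspose_smul, Matrix.smul_mul, Matrix.mul_smul, smul_smul, hz, one_smul,
    conjTranspose_one, Matrix.one_mul] at hgram
  exact add_left_cancel hgram

end Matrix

/-- if the realization matrix `R = [[A, B], [C, D]]` satisfies
`Rᴴ R = I`, then `F(z) = C (zI - A)⁻¹ B + D` is an isometry for every `z` on the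
unit circle at which `zI - A` is invertible. -/
theorem realization_isometry
    (ν p m : ℕ)
    (A : Matrix (Fin ν) (Fin ν) ℂ) (B : Matrix (Fin ν) (Fin m) ℂ)
    (C : Matrix (Fin p) (Fin ν) ℂ) (D : Matrix (Fin p) (Fin m) ℂ)
    (hR : (Matrix.fromBlocks A B C D)ᴴ * Matrix.fromBlocks A B C D = 1)
    (z : ℂ) (hz : ‖z‖ = 1)
    (hzA : IsUnit (z • (1 : Matrix (Fin ν) (Fin ν) ℂ) - A)) :
    (C * (z • (1 : Matrix (Fin ν) (Fin ν) ℂ) - A)⁻¹ * B + D)ᴴ *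
      (C * (z • (1 : Matrix (Fin ν) (Fin ν) ℂ) - A)⁻¹ * B + D) = 1 := by
  have hzz : star z * z = 1 := by
    rw [RCLike.star_def, RCLike.conj_mul, hz]
    norm_num
  rw [Matrix.mul_assoc C]
  exact conjTranspose_mul_self_eq_one_of_fromBlocks hR hzz (mul_resolvent_mul_add hzA B)
end

section
/- Let A be ν×ν, B be ν×m, C be p×ν and D be p×m complex matrices, and let R be the (ν+p)×(ν+m) block matrix R = [[A, B], [C, D]]. Assume R R* = I_{ν+p}. Then for every z on the unit circle 𝕋 such that z·I_ν − A is invertible, the matrix F(z) = C (z·I_ν − A)^{-1} B + D satisfies F(z) F(z)* = I_p. -/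
open Matrix

/-!
Put `G = (z I - A)⁻¹` and multiply `R` on the left by the row `L = [C G, I]`. Since
`C G A + C = C G (A + (z I - A)) = z C G`, this gives `L R = [z C G, F(z)]`. Comparing
`(L R)(L R)ᴴ = L Lᴴ` (from `R Rᴴ = I`) block by block yields
`|z|² C G Gᴴ Cᴴ + F Fᴴ = C G Gᴴ Cᴴ + I`, and `|z| = 1` leaves `F Fᴴ = I`.
-/

namespace Matrix

variable {α : Type*} [CommRing α] {n m p : Type*} [Fintype n] [Fintype p] [DecidableEq n]
  [DecidableEq p]

lemma mul_conjTranspose_eq_one_of_fromCols_one_mul [Fintype m] [StarRing α]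
    {R : Matrix (n ⊕ p) (n ⊕ m) α} (hR : R * Rᴴ = 1) {X : Matrix p n α} {F : Matrix p m α}
    {z : α} (hz : star z * z = 1)
    (hL : fromCols X (1 : Matrix p p α) * R = fromCols (z • X) F) :
    F * Fᴴ = 1 := by
  set L := fromCols X (1 : Matrix p p α)
  have hLL : L * R * (L * R)ᴴ = X * Xᴴ + 1 := by
    rw [conjTranspose_mul, Matrix.mul_assoc, ← Matrix.mul_assoc R, hR, Matrix.one_mul,
      conjTranspose_fromCols_eq_fromRows_conjTranspose, fromCols_mul_fromRows,
      conjTranspose_one, Matrix.one_mul]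
  have hzX : z • X * (z • X)ᴴ = X * Xᴴ := by
    rw [conjTranspose_smul, Matrix.smul_mul, Matrix.mul_smul, smul_smul, mul_comm, hz,
      one_smul]
  rw [hL, conjTranspose_fromCols_eq_fromRows_conjTranspose, fromCols_mul_fromRows, hzX]
    at hLL
  exact add_left_cancel hLL

lemma fromCols_mul_fromBlocks_of_resolvent {A : Matrix n n α}
    {B : Matrix n m α} {C : Matrix p n α} {D : Matrix p m α} {z : α} {G : Matrix n n α}
    (hG : G * (z • 1 - A) = 1) :
    fromCols (C * G) (1 : Matrix p p α) * fromBlocks A B C D =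
      fromCols (z • (C * G)) (C * G * B + D) := by
  have hCGA : C * G * A + C = z • (C * G) := by
    rw [Matrix.mul_sub, Matrix.mul_smul, Matrix.mul_one, sub_eq_iff_eq_add] at hG
    rw [Matrix.mul_assoc, ← Matrix.mul_smul, hG, Matrix.mul_add, Matrix.mul_one, add_comm]
  rw [fromCols_mul_fromBlocks, Matrix.one_mul, Matrix.one_mul, hCGA]

end Matrix

/-- if the realization matrix `R = [[A, B], [C, D]]` satisfies
`R Rᴴ = I`, then `F(z) = C (zI - A)⁻¹ B + D` is a co-isometry for every `z` on
the unit circle at which `zI - A` is invertible. -/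
theorem realization_coisometry
    (ν p m : ℕ)
    (A : Matrix (Fin ν) (Fin ν) ℂ) (B : Matrix (Fin ν) (Fin m) ℂ)
    (C : Matrix (Fin p) (Fin ν) ℂ) (D : Matrix (Fin p) (Fin m) ℂ)
    (hR : Matrix.fromBlocks A B C D * (Matrix.fromBlocks A B C D)ᴴ = 1)
    (z : ℂ) (hz : ‖z‖ = 1)
    (hzA : IsUnit (z • (1 : Matrix (Fin ν) (Fin ν) ℂ) - A)) :
    (C * (z • (1 : Matrix (Fin ν) (Fin ν) ℂ) - A)⁻¹ * B + D) *
      (C * (z • (1 : Matrix (Fin ν) (Fin ν) ℂ) - A)⁻¹ * B + D)ᴴ = 1 := by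
  have hzz : star z * z = 1 := by
    rw [Complex.star_def, Complex.conj_mul', hz]; norm_num
  have hG := nonsing_inv_mul _ ((isUnit_iff_isUnit_det _).mp hzA)
  exact mul_conjTranspose_eq_one_of_fromCols_one_mul hR hzz
    (fromCols_mul_fromBlocks_of_resolvent hG)
end

section
/- Let A be ν×ν, B be ν×m, C be p×ν, D be p×m complex matrices with R = [[A, B], [C, D]] satisfying R* R = I_{ν+m}, and assume every eigenvalue of A has modulus strictly less than 1. Then: (a) any ν×ν complex matrix W satisfying the Stein equation W − A* W A = C* C equals I_ν (i.e., the observability Gramian is the identity); (b) any Hermitian ν×ν matrix W satisfying the Stein equation W − A W A* = B B* satisfies W ≤ I_ν, i.e., I_ν − W is positive semidefinite (the controllability Gramian is a contraction). -/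
open Matrix ComplexOrder
open Filter Topology Finset

/-!
The top-left blocks of `Rᴴ R = 1` and of `R Rᴴ ≤ 1` (true because `R Rᴴ` is then an orthogonal
projection) give `Aᴴ A + Cᴴ C = 1` and `A Aᴴ + B Bᴴ ≤ 1`. Hence `W - 1` solves the homogeneous
Stein equation `X = Aᴴ X A`, and `1 - W` solves `X - A X Aᴴ = Q` with `Q = 1 - A Aᴴ - B Bᴴ ≥ 0`.
Iterating a Stein equation gives `X = Aᴺ X (Aᴴ)ᴺ + ∑_{k<N} Aᵏ Q (Aᴴ)ᵏ`, and `Aᴺ → 0` by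
Gelfand's formula because the spectral radius of `A` is below `1`. So `X = 0` in the first case,
and in the second `X` is a limit of positive semidefinite matrices.
-/

section BanachAlgebra

variable {𝔸 : Type*} [NormedRing 𝔸] [NormedAlgebra ℂ 𝔸] [CompleteSpace 𝔸] {a : 𝔸}

theorem spectralRadius_lt_one_of_forall_norm_lt_one (h : ∀ μ ∈ spectrum ℂ a, ‖μ‖ < 1) :
    spectralRadius ℂ a < 1 := by
  rcases (spectrum ℂ a).eq_empty_or_nonempty with he | hne
  · simp [spectralRadius, he]
  · exact_mod_cast spectrum.spectralRadius_lt_of_forall_lt_of_nonempty hne (r := 1)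
      fun z hz ↦ by exact_mod_cast h z hz

theorem tendsto_pow_atTop_nhds_zero_of_spectralRadius_lt_one (ha : spectralRadius ℂ a < 1) :
    Tendsto (a ^ ·) atTop (𝓝 0) := by
  obtain ⟨r, hρr, hr1⟩ := ENNReal.lt_iff_exists_nnreal_btwn.mp ha
  have hbound : ∀ᶠ n : ℕ in atTop, ‖a ^ n‖ ≤ (r : ℝ) ^ n := by
    filter_upwards
      [(spectrum.pow_nnnorm_pow_one_div_tendsto_nhds_spectralRadius a).eventually_lt_const hρr,
        eventually_ne_atTop 0] with n hn hn0
    rw [one_div, ENNReal.rpow_inv_lt_iff (by positivity), ENNReal.rpow_natCast] at hn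
    exact_mod_cast hn.le
  exact squeeze_zero_norm' hbound
    (tendsto_pow_atTop_nhds_zero_of_lt_one r.coe_nonneg (by exact_mod_cast hr1))

end BanachAlgebra

theorem Matrix.tendsto_pow_atTop_nhds_zero_of_forall_norm_lt_one {n : Type*} [Fintype n]
    [DecidableEq n] {A : Matrix n n ℂ} (hA : ∀ μ ∈ spectrum ℂ A, ‖μ‖ < 1) :
    Tendsto (A ^ ·) atTop (𝓝 0) :=
  -- only the topology matters here, and every choice of matrix norm induces the product topology
  letI := Matrix.linftyOpNormedRing (n := n) (α := ℂ)
  letI := Matrix.linftyOpNormedAlgebra (n := n) (α := ℂ) (R := ℂ)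
  tendsto_pow_atTop_nhds_zero_of_spectralRadius_lt_one
    (spectralRadius_lt_one_of_forall_norm_lt_one hA)

section SteinEquation

variable {R : Type*} [Ring R] [StarRing R] {a x q : R}

theorem eq_pow_mul_mul_star_pow_add_sum_of_sub_eq (h : x - a * x * star a = q) (N : ℕ) :
    x = a ^ N * x * star a ^ N + ∑ k ∈ range N, a ^ k * q * star a ^ k := by
  induction N with
  | zero => simp
  | succ N ih =>
    have hstep : a ^ N * x * star a ^ N =
        a ^ (N + 1) * x * star a ^ (N + 1) + a ^ N * q * star a ^ N := by
      rw [← h, pow_succ, pow_succ']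
      noncomm_ring
    rw [sum_range_succ]
    nth_rw 1 [ih]
    rw [hstep]
    abel

variable [TopologicalSpace R] [IsTopologicalRing R] [ContinuousStar R]

theorem tendsto_sum_pow_mul_mul_star_pow_of_sub_eq (ha : Tendsto (a ^ ·) atTop (𝓝 0))
    (h : x - a * x * star a = q) :
    Tendsto (fun N ↦ ∑ k ∈ range N, a ^ k * q * star a ^ k) atTop (𝓝 x) := by
  have hrem : Tendsto (fun N : ℕ ↦ a ^ N * x * star a ^ N) atTop (𝓝 0) := by
    simpa [← star_pow] using (ha.mul_const x).mul ha.star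
  have hlim := (tendsto_const_nhds (x := x)).sub hrem
  rw [sub_zero] at hlim
  refine hlim.congr fun N ↦ ?_
  rw [sub_eq_iff_eq_add', ← eq_pow_mul_mul_star_pow_add_sum_of_sub_eq h N]

theorem eq_zero_of_sub_mul_mul_star_eq_zero [T2Space R] (ha : Tendsto (a ^ ·) atTop (𝓝 0))
    (h : x - a * x * star a = 0) : x = 0 :=
  tendsto_nhds_unique (tendsto_sum_pow_mul_mul_star_pow_of_sub_eq ha h) (by simp)

end SteinEquation

section PosSemidef

variable {m n R : Type*} [Fintype m] [Fintype n] [Ring R] [PartialOrder R] [StarRing R]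

theorem Matrix.isClosed_setOf_posSemidef [TopologicalSpace R] [IsTopologicalRing R]
    [ContinuousStar R] [OrderClosedTopology R] :
    IsClosed {M : Matrix n n R | M.PosSemidef} := by
  simp only [posSemidef_iff_dotProduct_mulVec, Set.ofPred_and, Set.ofPred_forall]
  refine (isClosed_eq continuous_id.matrix_conjTranspose continuous_id).inter
    (isClosed_iInter fun v ↦ isClosed_le continuous_const ?_)
  exact continuous_const.dotProduct (continuous_id.matrix_mulVec continuous_const)

theorem Matrix.posSemidef_one_sub_mul_conjTranspose_of_conjTranspose_mul_eq_one [DecidableEq m]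
    [DecidableEq n] [StarOrderedRing R] {M : Matrix m n R} (h : Mᴴ * M = 1) :
    (1 - M * Mᴴ).PosSemidef := by
  have hidem : (M * Mᴴ) * (M * Mᴴ) = M * Mᴴ := by
    rw [Matrix.mul_assoc, ← Matrix.mul_assoc Mᴴ, h, Matrix.one_mul]
  have hsq : 1 - M * Mᴴ = (1 - M * Mᴴ)ᴴ * (1 - M * Mᴴ) := by
    simp only [conjTranspose_sub, conjTranspose_one, conjTranspose_mul,
      conjTranspose_conjTranspose, Matrix.sub_mul, Matrix.mul_sub, Matrix.mul_one,
      Matrix.one_mul, hidem]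
    abel
  exact hsq ▸ posSemidef_conjTranspose_mul_self _

end PosSemidef

/-- if `R = [[A, B], [C, D]]` satisfies `Rᴴ R = I` and `A` is Schur
stable (all eigenvalues in the open unit disk), then the observability Gramian is
the identity and the controllability Gramian is bounded above by the identity. -/
theorem isometric_realization_gramians
    (ν p m : ℕ)
    (A : Matrix (Fin ν) (Fin ν) ℂ) (B : Matrix (Fin ν) (Fin m) ℂ)
    (C : Matrix (Fin p) (Fin ν) ℂ) (D : Matrix (Fin p) (Fin m) ℂ)
    (hR : (Matrix.fromBlocks A B C D)ᴴ * Matrix.fromBlocks A B C D = 1)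
    (hA : ∀ μ ∈ spectrum ℂ A, ‖μ‖ < 1) :
    (∀ W : Matrix (Fin ν) (Fin ν) ℂ, W - Aᴴ * W * A = Cᴴ * C → W = 1) ∧
    (∀ W : Matrix (Fin ν) (Fin ν) ℂ, Wᴴ = W → W - A * W * Aᴴ = B * Bᴴ →
      (1 - W).PosSemidef) := by
  have hpow := tendsto_pow_atTop_nhds_zero_of_forall_norm_lt_one hA
  have hRRstar := posSemidef_one_sub_mul_conjTranspose_of_conjTranspose_mul_eq_one hR
  rw [fromBlocks_conjTranspose, fromBlocks_multiply] at hR hRRstar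
  have hAC : Aᴴ * A + Cᴴ * C = 1 := (fromBlocks_inj.mp (hR.trans fromBlocks_one.symm)).1
  have hAB : (1 - (A * Aᴴ + B * Bᴴ)).PosSemidef := by
    convert hRRstar.submatrix Sum.inl using 1
    ext i j
    simp [one_apply]
  refine ⟨fun W hW ↦ ?_, fun W _ hW ↦ ?_⟩
  · have hpowStar : Tendsto (Aᴴ ^ ·) atTop (𝓝 0) := by
      simpa [star_eq_conjTranspose] using hpow.star
    refine sub_eq_zero.mp (eq_zero_of_sub_mul_mul_star_eq_zero hpowStar ?_)
    rw [star_eq_conjTranspose, conjTranspose_conjTranspose,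
      show W - 1 - Aᴴ * (W - 1) * A = (W - Aᴴ * W * A) - (1 - Aᴴ * A) by noncomm_ring,
      hW, ← hAC]
    abel
  · have hX : (1 - W) - A * (1 - W) * star A = 1 - (A * Aᴴ + B * Bᴴ) := by
      rw [star_eq_conjTranspose, ← hW]
      noncomm_ring
    refine isClosed_setOf_posSemidef.mem_of_tendsto
      (tendsto_sum_pow_mul_mul_star_pow_of_sub_eq hpow hX) (.of_forall fun N ↦ ?_)
    refine posSemidef_sum _ fun k _ ↦ ?_
    simpa [star_eq_conjTranspose, conjTranspose_pow] using hAB.mul_mul_conjTranspose_same (A ^ k)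
end

section
/- Let A be ν×ν, B be ν×m, C be p×ν, D be p×m complex matrices with R = [[A, B], [C, D]] satisfying R R* = I_{ν+p}, and assume every eigenvalue of A has modulus strictly less than 1. Then: (a) any ν×ν complex matrix W satisfying the Stein equation W − A W A* = B B* equals I_ν (i.e., the controllability Gramian is the identity); (b) any Hermitian ν×ν matrix W satisfying the Stein equation W − A* W A = C* C satisfies W ≤ I_ν, i.e., I_ν − W is positive semidefinite (the observability Gramian is a contraction). -/
/-!
From `R Rᴴ = 1` one reads off `A Aᴴ + B Bᴴ = 1`, so `X = W - 1` solves the homogeneous equation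
`X = A X Aᴴ`; iterating, `X = Aⁿ X (Aᴴ)ⁿ`, and `Aⁿ → 0` by Gelfand's formula since the spectral
radius of `A` is `< 1`. For (b), `Rᴴ R` is an orthogonal projection, so its corner
`Aᴴ A + Cᴴ C` is `≤ 1`; then `V = 1 - W` satisfies `V - Aᴴ V A = 1 - Aᴴ A - Cᴴ C ≥ 0`, and
`V = lim (V - (Aⁿ)ᴴ V Aⁿ)` is a limit of sums of congruences of that positive matrix.
-/

open Matrix ComplexOrder Filter Topology
open scoped NNReal

theorem tendsto_pow_atTop_nhds_zero_of_spectralRadius_lt_one_s14 {A : Type*} [NormedRing A]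
    [NormedAlgebra ℂ A] [CompleteSpace A] {a : A} (ha : spectralRadius ℂ a < 1) :
    Tendsto (fun n : ℕ => a ^ n) atTop (𝓝 0) := by
  obtain ⟨r, hr_gt, hr_lt⟩ := ENNReal.lt_iff_exists_nnreal_btwn.mp ha
  have hgelfand := spectrum.pow_nnnorm_pow_one_div_tendsto_nhds_spectralRadius a
  have hbound : ∀ᶠ n : ℕ in atTop, ‖a ^ n‖ ≤ r ^ n := by
    filter_upwards [hgelfand.eventually_lt_const hr_gt, eventually_gt_atTop 0] with n hn hn0
    rw [one_div, ENNReal.rpow_inv_lt_iff (by positivity), ENNReal.rpow_natCast] at hn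
    exact_mod_cast hn.le
  exact squeeze_zero_norm' hbound
    (tendsto_pow_atTop_nhds_zero_of_lt_one r.coe_nonneg (mod_cast hr_lt))

theorem spectralRadius_lt_one_of_forall_norm_lt_one_s14 {A : Type*} [NormedRing A]
    [NormedAlgebra ℂ A] [CompleteSpace A] {a : A} (ha : ∀ z ∈ spectrum ℂ a, ‖z‖ < 1) :
    spectralRadius ℂ a < 1 := by
  rcases (spectrum ℂ a).eq_empty_or_nonempty with h | h
  · simp [spectralRadius, h]
  · exact_mod_cast spectrum.spectralRadius_lt_of_forall_lt_of_nonempty h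
      fun z hz => (by exact_mod_cast ha z hz : ‖z‖₊ < (1 : ℝ≥0))

theorem Matrix.tendsto_pow_atTop_nhds_zero {n : Type*} [Fintype n] [DecidableEq n]
    {A : Matrix n n ℂ} (hA : ∀ z ∈ spectrum ℂ A, ‖z‖ < 1) :
    Tendsto (fun k : ℕ => A ^ k) atTop (𝓝 0) := by
  -- any norm would do; the `ℓ∞` operator norm induces the product topology
  let := Matrix.linftyOpNormedRing (n := n) (α := ℂ)
  let := Matrix.linftyOpNormedAlgebra (n := n) (R := ℂ) (α := ℂ)
  have : CompleteSpace (Matrix n n ℂ) := FiniteDimensional.complete ℂ _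
  exact tendsto_pow_atTop_nhds_zero_of_spectralRadius_lt_one_s14
    (spectralRadius_lt_one_of_forall_norm_lt_one_s14 hA)

theorem eq_zero_of_eq_mul_mul_of_tendsto_pow {R : Type*} [Semiring R] [TopologicalSpace R]
    [ContinuousMul R] [T2Space R] {a b x : R} (ha : Tendsto (fun n : ℕ => a ^ n) atTop (𝓝 0))
    (hb : Tendsto (fun n : ℕ => b ^ n) atTop (𝓝 0)) (hx : x = a * x * b) : x = 0 := by
  have hpow : ∀ k : ℕ, x = a ^ k * x * b ^ k := by
    intro k
    induction k with
    | zero => simp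
    | succ k ih =>
      calc x = a * (a ^ k * x * b ^ k) * b := by rw [← ih, ← hx]
        _ = a ^ (k + 1) * x * b ^ (k + 1) := by
          rw [pow_succ' a, pow_succ b]; simp only [mul_assoc]
  have hlim : Tendsto (fun k : ℕ => a ^ k * x * b ^ k) atTop (𝓝 (0 * x * 0)) :=
    (ha.mul_const x).mul hb
  rw [zero_mul, zero_mul] at hlim
  exact tendsto_nhds_unique (by simpa only [← hpow] using tendsto_const_nhds) hlim

section RCLike

variable {𝕜 : Type*} [RCLike 𝕜]

theorem Matrix.posSemidef_one_sub_conjTranspose_mul_self_of_mul_conjTranspose_eq_one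
    {m n : Type*} [Fintype m] [Fintype n] [DecidableEq m] [DecidableEq n] {R : Matrix m n 𝕜}
    (hR : R * Rᴴ = 1) : (1 - Rᴴ * R).PosSemidef := by
  have hidem : (1 - Rᴴ * R)ᴴ * (1 - Rᴴ * R) = 1 - Rᴴ * R := by
    simp only [conjTranspose_sub, conjTranspose_one, conjTranspose_mul,
      conjTranspose_conjTranspose, mul_sub, sub_mul, one_mul, mul_one, Matrix.mul_assoc]
    rw [← Matrix.mul_assoc R, hR, Matrix.one_mul, sub_self, sub_zero]
  rw [← hidem]
  exact posSemidef_conjTranspose_mul_self _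

theorem Matrix.PosSemidef.toBlocks₁₁ {m n : Type*} [Fintype m] {M : Matrix (m ⊕ n) (m ⊕ n) 𝕜}
    (hM : M.PosSemidef) : M.toBlocks₁₁.PosSemidef :=
  hM.submatrix Sum.inl

theorem Matrix.PosSemidef.of_posSemidef_sub_conjTranspose_mul_mul {n : Type*} [Fintype n]
    [DecidableEq n] {A V : Matrix n n 𝕜} (hV : V.IsHermitian) (hstein : (V - Aᴴ * V * A).PosSemidef)
    (hA : Tendsto (fun k : ℕ => A ^ k) atTop (𝓝 0)) : V.PosSemidef := by
  have htrunc : ∀ k : ℕ, (V - (A ^ k)ᴴ * V * A ^ k).PosSemidef := by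
    intro k
    induction k with
    | zero => simpa using PosSemidef.zero
    | succ k ih =>
      have hsplit : V - (A ^ (k + 1))ᴴ * V * A ^ (k + 1)
          = (V - (A ^ k)ᴴ * V * A ^ k) + (A ^ k)ᴴ * (V - Aᴴ * V * A) * A ^ k := by
        rw [pow_succ', conjTranspose_mul]
        simp only [Matrix.mul_sub, Matrix.sub_mul, Matrix.mul_assoc]
        abel
      rw [hsplit]
      exact ih.add (hstein.conjTranspose_mul_mul_same _)
  have hlim : Tendsto (fun k : ℕ => V - (A ^ k)ᴴ * V * A ^ k) atTop (𝓝 V) := by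
    have := ((continuous_id.matrix_conjTranspose.tendsto 0).comp hA).mul_const V |>.mul hA
    simpa using tendsto_const_nhds.sub this
  refine .of_dotProduct_mulVec_nonneg hV fun x => ?_
  have hform : Continuous fun M : Matrix n n 𝕜 => star x ⬝ᵥ (M *ᵥ x) :=
    continuous_const.dotProduct (continuous_id.matrix_mulVec continuous_const)
  exact ge_of_tendsto' ((hform.tendsto V).comp hlim) fun k =>
    (htrunc k).dotProduct_mulVec_nonneg x

end RCLike

/-- if `R = [[A, B], [C, D]]` satisfies `R Rᴴ = I` and `A` is Schur
stable (all eigenvalues in the open unit disk), then the controllability Gramian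
is the identity and the observability Gramian is bounded above by the identity. -/
theorem coisometric_realization_gramians
    (ν p m : ℕ)
    (A : Matrix (Fin ν) (Fin ν) ℂ) (B : Matrix (Fin ν) (Fin m) ℂ)
    (C : Matrix (Fin p) (Fin ν) ℂ) (D : Matrix (Fin p) (Fin m) ℂ)
    (hR : Matrix.fromBlocks A B C D * (Matrix.fromBlocks A B C D)ᴴ = 1)
    (hA : ∀ μ ∈ spectrum ℂ A, ‖μ‖ < 1) :
    (∀ W : Matrix (Fin ν) (Fin ν) ℂ, W - A * W * Aᴴ = B * Bᴴ → W = 1) ∧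
    (∀ W : Matrix (Fin ν) (Fin ν) ℂ, Wᴴ = W → W - Aᴴ * W * A = Cᴴ * C →
      (1 - W).PosSemidef) := by
  have hA_pow : Tendsto (fun k : ℕ => A ^ k) atTop (𝓝 0) :=
    Matrix.tendsto_pow_atTop_nhds_zero hA
  have hAH_pow : Tendsto (fun k : ℕ => Aᴴ ^ k) atTop (𝓝 0) := by
    simpa [Function.comp_def] using (continuous_id.matrix_conjTranspose.tendsto 0).comp hA_pow
  have hAB : A * Aᴴ + B * Bᴴ = 1 := by
    simpa [fromBlocks_conjTranspose, fromBlocks_multiply, ← fromBlocks_one] using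
      congrArg toBlocks₁₁ hR
  have hAC : (1 - (Aᴴ * A + Cᴴ * C)).PosSemidef := by
    have h :=
      (posSemidef_one_sub_conjTranspose_mul_self_of_mul_conjTranspose_eq_one hR).toBlocks₁₁
    simpa [fromBlocks_conjTranspose, fromBlocks_multiply, ← fromBlocks_one, sub_eq_add_neg,
      fromBlocks_neg, fromBlocks_add] using h
  refine ⟨fun W hW => ?_, fun W hWH hW => ?_⟩
  · refine sub_eq_zero.mp (eq_zero_of_eq_mul_mul_of_tendsto_pow hA_pow hAH_pow ?_)
    calc W - 1 = (W - B * Bᴴ) - (1 - B * Bᴴ) := by abel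
      _ = A * W * Aᴴ - A * Aᴴ := by rw [← hAB, ← hW]; abel
      _ = A * (W - 1) * Aᴴ := by rw [Matrix.mul_sub, Matrix.sub_mul, Matrix.mul_one]
  · refine .of_posSemidef_sub_conjTranspose_mul_mul ?_ ?_ hA_pow
    · simp [IsHermitian, hWH]
    · have hQ : 1 - W - Aᴴ * (1 - W) * A = 1 - (Aᴴ * A + Cᴴ * C) := by
        rw [← hW, Matrix.mul_sub, Matrix.sub_mul, Matrix.mul_one]
        abel
      rw [hQ]
      exact hAC
end

section
/- Let B_1,…,B_n be p×m complex matrices with F_0(z) = ∑_{j=1}^n z^{-j} B_j satisfying F_0(z)* F_0(z) = I_m for all z on the unit circle, and suppose n = ρκ for integers ρ, κ ≥ 1. For i = 1,…,κ let 𝐁_i be the ρp×m matrix obtained by stacking B_{(i−1)ρ+1}, B_{(i−1)ρ+2}, …, B_{iρ} vertically (the a-th p×m block of 𝐁_i is B_{(i−1)ρ+a}). Then G(z) = ∑_{i=1}^{κ} z^{-i} 𝐁_i satisfies G(z)* G(z) = I_m for all z on the unit circle. -/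
open Matrix Finset

/-! Write `z = w ^ ρ` with `‖w‖ = 1`. Splitting `j = ρ i + (ρ - 1 - a)` gives the polyphase
decomposition `F₀(u) = ∑_{a<ρ} u ^ a • E_{ρ-1-a}(z)` for every `ρ`-th root `u` of `z`, where the
`E_a` are the blocks of `G`, so that `G(z)ᴴ G(z) = ∑_a E_aᴴ E_a`. Averaging `F₀(u)ᴴ F₀(u) = 1` over
the `ρ` roots `u = ζ ^ k w` kills the cross terms `u ^ (b - a)` with `a ≠ b` (orthogonality of the
characters of `ℤ/ρ`) and leaves `ρ • G(z)ᴴ G(z) = ρ • 1`. -/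

noncomputable def fir {α β : Type*} (N : ℕ) (A : ℕ → Matrix α β ℂ) (z : ℂ) : Matrix α β ℂ :=
  ∑ j ∈ range N, z ^ (-(j + 1 : ℤ)) • A j

def stack {α β R : Type*} (ρ : ℕ) (E : ℕ → Matrix α β R) : Matrix (Fin ρ × α) β R :=
  of fun q y => E q.1 q.2 y

theorem Finset.sum_range_mul_eq_sum_sum {M : Type*} [AddCommMonoid M] (f : ℕ → M) (ρ κ : ℕ) :
    ∑ j ∈ range (ρ * κ), f j = ∑ i ∈ range κ, ∑ a ∈ range ρ, f (ρ * i + a) := by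
  induction κ with
  | zero => simp
  | succ κ ih => rw [Nat.mul_succ, sum_range_add, ih, sum_range_succ]

theorem fir_mul_eq_sum_pow_smul {α β : Type*} {w : ℂ} (hw : w ≠ 0) (ρ κ : ℕ)
    (A : ℕ → Matrix α β ℂ) :
    fir (ρ * κ) A w =
      ∑ a ∈ range ρ, w ^ a • fir κ (fun i => A (ρ * i + (ρ - 1 - a))) (w ^ ρ) := by
  rw [fir, sum_range_mul_eq_sum_sum, sum_comm, ← sum_range_reflect _ ρ]
  refine sum_congr rfl fun a ha => ?_
  rw [fir, smul_sum]
  refine sum_congr rfl fun i _ => ?_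
  have ha : a < ρ := mem_range.mp ha
  rw [smul_smul, ← zpow_natCast w a, ← zpow_natCast w ρ, ← _root_.zpow_mul, ← zpow_add₀ hw]
  congr 2
  push_cast [Nat.sub_sub, Nat.cast_sub (show 1 + a ≤ ρ by omega)]
  ring

theorem fir_stack {α β : Type*} (ρ κ : ℕ) (E : ℕ → ℕ → Matrix α β ℂ) (z : ℂ) :
    fir κ (fun i => stack ρ (E i)) z = stack ρ (fun a => fir κ (fun i => E i a) z) := by
  ext q y
  simp [fir, stack, Matrix.sum_apply]

theorem conjTranspose_stack_mul_stack {α β R : Type*} [Fintype α] [CommSemiring R] [StarRing R]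
    (ρ : ℕ) (E : ℕ → Matrix α β R) :
    (stack ρ E)ᴴ * stack ρ E = ∑ a ∈ range ρ, (E a)ᴴ * E a := by
  ext x y
  simp only [stack, mul_apply, conjTranspose_apply, of_apply, Matrix.sum_apply,
    Fintype.sum_prod_type]
  exact Fin.sum_univ_eq_sum_range (fun a => ∑ b, star (E a b x) * E a b y) ρ

theorem conjTranspose_sum_smul_mul_sum_smul {ι α β : Type*} [Fintype α] (s : Finset ι)
    (c : ι → ℂ) (X : ι → Matrix α β ℂ) :
    (∑ a ∈ s, c a • X a)ᴴ * ∑ b ∈ s, c b • X b =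
      ∑ a ∈ s, ∑ b ∈ s, (star (c a) * c b) • ((X a)ᴴ * X b) := by
  rw [conjTranspose_sum, Matrix.sum_mul]
  refine sum_congr rfl fun a _ => ?_
  rw [Matrix.mul_sum]
  refine sum_congr rfl fun b _ => ?_
  rw [conjTranspose_smul, Matrix.smul_mul, Matrix.mul_smul, smul_smul]

theorem Complex.star_pow_mul_pow_of_norm_eq_one {u : ℂ} (hu : ‖u‖ = 1) (a b : ℕ) :
    star (u ^ a) * u ^ b = u ^ ((b : ℤ) - a) := by
  have hu0 : u ≠ 0 := norm_ne_zero_iff.mp (by rw [hu]; exact one_ne_zero)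
  rw [star_pow, Complex.star_def, ← Complex.inv_eq_conj hu, inv_pow, ← zpow_natCast,
    ← zpow_natCast, ← _root_.zpow_neg, ← zpow_add₀ hu0, neg_add_eq_sub]

theorem IsPrimitiveRoot.norm_pow_mul_eq_one {ζ w : ℂ} {ρ : ℕ} (hζ : IsPrimitiveRoot ζ ρ)
    (hρ : ρ ≠ 0) (hw : ‖w‖ = 1) (k : ℕ) : ‖ζ ^ k * w‖ = 1 := by
  rw [norm_mul, norm_pow, hζ.norm'_eq_one hρ, hw, one_pow, one_mul]

theorem IsPrimitiveRoot.geom_sum_zpow_eq_zero {ζ : ℂ} {ρ : ℕ} (hζ : IsPrimitiveRoot ζ ρ) {d : ℤ}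
    (hd : ¬ (ρ : ℤ) ∣ d) : ∑ k ∈ range ρ, (ζ ^ d) ^ k = 0 := by
  have hne : ζ ^ d ≠ 1 := fun h => hd ((hζ.zpow_eq_one_iff_dvd d).mp h)
  rw [geom_sum_eq hne, ← zpow_natCast, ← _root_.zpow_mul, mul_comm, _root_.zpow_mul, zpow_natCast,
    hζ.pow_eq_one, _root_.one_zpow, sub_self, zero_div]

theorem IsPrimitiveRoot.sum_star_pow_mul_pow {ζ w : ℂ} {ρ a b : ℕ} (hζ : IsPrimitiveRoot ζ ρ)
    (hw : ‖w‖ = 1) (ha : a < ρ) (hb : b < ρ) :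
    ∑ k ∈ range ρ, star ((ζ ^ k * w) ^ a) * (ζ ^ k * w) ^ b = if a = b then (ρ : ℂ) else 0 := by
  have hrot : ∀ k : ℕ,
      (ζ ^ k * w) ^ ((b : ℤ) - a) = w ^ ((b : ℤ) - a) * (ζ ^ ((b : ℤ) - a)) ^ k := fun k => by
    rw [mul_zpow, mul_comm, ← zpow_natCast, ← _root_.zpow_mul, ← zpow_natCast, ← _root_.zpow_mul,
      mul_comm (k : ℤ)]
  simp_rw [Complex.star_pow_mul_pow_of_norm_eq_one (hζ.norm_pow_mul_eq_one (by omega) hw _), hrot,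
    ← mul_sum]
  split_ifs with hab
  · simp [hab]
  · rw [hζ.geom_sum_zpow_eq_zero, mul_zero]
    intro h
    have := Int.eq_zero_of_dvd_of_natAbs_lt_natAbs h (by omega)
    omega

theorem IsPrimitiveRoot.sum_conjTranspose_mul_self_rotate {α β : Type*} [Fintype α] {ζ w : ℂ}
    {ρ : ℕ} (hζ : IsPrimitiveRoot ζ ρ) (hw : ‖w‖ = 1) (X : ℕ → Matrix α β ℂ) :
    ∑ k ∈ range ρ, (∑ a ∈ range ρ, (ζ ^ k * w) ^ a • X a)ᴴ * ∑ a ∈ range ρ, (ζ ^ k * w) ^ a • X a =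
      (ρ : ℂ) • ∑ a ∈ range ρ, (X a)ᴴ * X a := by
  calc _ = ∑ a ∈ range ρ, ∑ b ∈ range ρ,
        (∑ k ∈ range ρ, star ((ζ ^ k * w) ^ a) * (ζ ^ k * w) ^ b) • ((X a)ᴴ * X b) := by
        simp_rw [conjTranspose_sum_smul_mul_sum_smul, sum_smul]
        rw [sum_comm]
        exact sum_congr rfl fun a _ => sum_comm
    _ = ∑ a ∈ range ρ, ∑ b ∈ range ρ, (if a = b then (ρ : ℂ) else 0) • ((X a)ᴴ * X b) :=
        sum_congr rfl fun a ha => sum_congr rfl fun b hb => by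
          rw [hζ.sum_star_pow_mul_pow hw (mem_range.mp ha) (mem_range.mp hb)]
    _ = _ := by
        rw [smul_sum]
        exact sum_congr rfl fun a ha => by simp [ite_smul, ha]

theorem fir_isometry_stacked_general
    (p m n ρ κ : ℕ) (hρ : 1 ≤ ρ) (hn : n = ρ * κ)
    (B : ℕ → Matrix (Fin p) (Fin m) ℂ)
    (hiso : ∀ z : ℂ, ‖z‖ = 1 →
      (∑ j ∈ Finset.range n, z ^ (-(j + 1 : ℤ)) • B (j + 1))ᴴ *
        (∑ j ∈ Finset.range n, z ^ (-(j + 1 : ℤ)) • B (j + 1)) = 1) :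
    ∀ z : ℂ, ‖z‖ = 1 →
      (∑ i ∈ Finset.range κ, z ^ (-(i + 1 : ℤ)) •
          Matrix.of (fun (q : Fin ρ × Fin p) (y : Fin m) =>
            B (ρ * i + q.1.val + 1) q.2 y))ᴴ *
        (∑ i ∈ Finset.range κ, z ^ (-(i + 1 : ℤ)) •
          Matrix.of (fun (q : Fin ρ × Fin p) (y : Fin m) =>
            B (ρ * i + q.1.val + 1) q.2 y)) = 1 := by
  intro z hz
  have hρ0 : ρ ≠ 0 := by omega
  obtain ⟨w, rfl⟩ := IsAlgClosed.exists_pow_nat_eq z hρ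
  have hw : ‖w‖ = 1 := (pow_eq_one_iff_of_nonneg (norm_nonneg w) hρ0).mp (by rwa [← norm_pow])
  obtain ⟨ζ, hζ⟩ : ∃ ζ : ℂ, IsPrimitiveRoot ζ ρ := ⟨_, Complex.isPrimitiveRoot_exp ρ hρ0⟩
  set E := fun a => fir κ (fun i => B (ρ * i + a + 1)) (w ^ ρ)
  have hu : ∀ k, ‖ζ ^ k * w‖ = 1 := hζ.norm_pow_mul_eq_one hρ0 hw
  have hF : ∀ k, fir n (fun j => B (j + 1)) (ζ ^ k * w) =
      ∑ a ∈ range ρ, (ζ ^ k * w) ^ a • E (ρ - 1 - a) := fun k => by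
    rw [hn, fir_mul_eq_sum_pow_smul (norm_ne_zero_iff.mp (by rw [hu k]; exact one_ne_zero)),
      mul_pow, ← pow_mul, mul_comm k, pow_mul, hζ.pow_eq_one, one_pow, one_mul]
  have hFiso : ∀ k, (fir n (fun j => B (j + 1)) (ζ ^ k * w))ᴴ *
      fir n (fun j => B (j + 1)) (ζ ^ k * w) = 1 := fun k => hiso _ (hu k)
  have hmean := hζ.sum_conjTranspose_mul_self_rotate hw (fun a => E (ρ - 1 - a))
  simp_rw [← hF, hFiso, sum_const, card_range, ← Nat.cast_smul_eq_nsmul ℂ] at hmean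
  rw [sum_range_reflect (fun a => (E a)ᴴ * E a)] at hmean
  change (fir κ (fun i => stack ρ (fun a => B (ρ * i + a + 1))) (w ^ ρ))ᴴ *
    fir κ (fun i => stack ρ (fun a => B (ρ * i + a + 1))) (w ^ ρ) = 1
  rw [fir_stack, conjTranspose_stack_mul_stack]
  exact (smul_right_injective _ (Nat.cast_ne_zero.mpr hρ0) hmean).symm

/-- if `F₀(z) = ∑_{j=1}^n z^{-j} B_j` is isometric on the unit
circle and `n = ρκ`, then the `ρp × m`-valued FIR `G(z) = ∑_{i=1}^κ z^{-i} 𝐁_i`,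
where `𝐁_i` stacks `B_{(i-1)ρ+1}, …, B_{iρ}` vertically, is isometric on the unit
circle. -/
theorem fir_isometry_stacked
    (p m n ρ κ : ℕ) (hρ : 1 ≤ ρ) (hκ : 1 ≤ κ) (hn : n = ρ * κ)
    (B : ℕ → Matrix (Fin p) (Fin m) ℂ)
    (hiso : ∀ z : ℂ, ‖z‖ = 1 →
      (∑ j ∈ Finset.range n, z ^ (-(j + 1 : ℤ)) • B (j + 1))ᴴ *
        (∑ j ∈ Finset.range n, z ^ (-(j + 1 : ℤ)) • B (j + 1)) = 1) :
    ∀ z : ℂ, ‖z‖ = 1 →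
      (∑ i ∈ Finset.range κ, z ^ (-(i + 1 : ℤ)) •
          Matrix.of (fun (q : Fin ρ × Fin p) (y : Fin m) =>
            B (ρ * i + q.1.val + 1) q.2 y))ᴴ *
        (∑ i ∈ Finset.range κ, z ^ (-(i + 1 : ℤ)) •
          Matrix.of (fun (q : Fin ρ × Fin p) (y : Fin m) =>
            B (ρ * i + q.1.val + 1) q.2 y)) = 1 :=
  fir_isometry_stacked_general p m n ρ κ hρ hn B hiso
end

section
/- Let B_1,…,B_n be p_b×ρ complex matrices and C_1,…,C_l be ρ×m_c complex matrices, and for k = 1,…,n+l−1 define D_k = ∑_{i+j=k+1, 1≤i≤n, 1≤j≤l} B_i C_j (so that (∑_{i=1}^n z^{-i}B_i)(∑_{j=1}^l z^{-j}C_j) = ∑_{k=1}^{n+l−1} z^{-(k+1)} D_k). Set N = n + l and define the following N×N block matrices: H_B with (r,s)-th p_b×ρ block equal to B_{r+s−l−1} (interpreted as 0 when r+s−l−1 lies outside {1,…,n}); H_C with (r,s)-th ρ×m_c block equal to C_{r+s−n−1} (0 when r+s−n−1 lies outside {1,…,l}); H_D with (r,s)-th p_b×m_c block equal to D_{r+s−2}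 (0 when r+s−2 lies outside {1,…,n+l−1}); and T the block anti-identity whose (i,j)-th ρ×ρ block is I_ρ when i+j = N+1 and 0 otherwise. Then H_D = H_B · T · H_C. -/
open Matrix Finset

lemma key_sum (pb ρ mc n l : ℕ)
    (B : ℕ → Matrix (Fin pb) (Fin ρ) ℂ) (C : ℕ → Matrix (Fin ρ) (Fin mc) ℂ)
    (hB0 : B 0 = 0) (hBn : ∀ j, n < j → B j = 0)
    (hC0 : C 0 = 0) (hCl : ∀ j, l < j → C j = 0)
    (r s : ℕ) (hr : r < n + l) (hs : s < n + l) :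
    ∑ j ∈ Finset.range (n + l), B (r + n - j) * C (j + s + 1 - n)
      = ∑ i ∈ Finset.Icc 1 n, ∑ j ∈ Finset.Icc 1 l,
          if i + j = r + s + 1 then B i * C j else 0 := by
  have h1 : ∑ j ∈ (Finset.range (n + l)).filter
        (fun j => r ≤ j ∧ j < r + n ∧ n ≤ j + s ∧ j + s < n + l),
        B (r + n - j) * C (j + s + 1 - n)
      = ∑ j ∈ Finset.range (n + l), B (r + n - j) * C (j + s + 1 - n) := by
    apply Finset.sum_filter_of_ne
    intro j hj hne
    simp only [Finset.mem_range] at hj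
    by_contra hP
    apply hne
    rcases Nat.lt_or_ge j r with h | h
    · rw [hBn _ (by omega), Matrix.zero_mul]
    rcases Nat.lt_or_ge j (r + n) with h2 | h2
    · rcases Nat.lt_or_ge (j + s) n with h3 | h3
      · have : j + s + 1 - n = 0 := by omega
        rw [this, hC0, Matrix.mul_zero]
      · rcases Nat.lt_or_ge (j + s) (n + l) with h4 | h4
        · exact absurd ⟨h, h2, h3, h4⟩ hP
        · rw [hCl _ (by omega), Matrix.mul_zero]
    · have : r + n - j = 0 := by omega
      rw [this, hB0, Matrix.zero_mul]
  rw [← h1]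
  have h2 : ∑ i ∈ Finset.Icc 1 n, ∑ j ∈ Finset.Icc 1 l,
        (if i + j = r + s + 1 then B i * C j else 0)
      = ∑ p ∈ (Finset.Icc 1 n ×ˢ Finset.Icc 1 l).filter
          (fun p => p.1 + p.2 = r + s + 1), B p.1 * C p.2 := by
    rw [Finset.sum_filter, Finset.sum_product]
  rw [h2]
  apply Finset.sum_nbij' (i := fun j => (r + n - j, j + s + 1 - n))
    (j := fun p => r + n - p.1)
  · intro j hj
    simp only [Finset.mem_filter, Finset.mem_range, Finset.mem_product,
      Finset.mem_Icc] at hj ⊢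
    omega
  · intro p hp
    simp only [Finset.mem_filter, Finset.mem_range, Finset.mem_product,
      Finset.mem_Icc] at hp ⊢
    omega
  · intro j hj
    simp only [Finset.mem_filter, Finset.mem_range] at hj
    omega
  · intro p hp
    simp only [Finset.mem_filter, Finset.mem_product, Finset.mem_Icc] at hp
    have h1 : r + n - (r + n - p.1) = p.1 := by omega
    have h2 : r + n - p.1 + s + 1 - n = p.2 := by omega
    rw [Prod.ext_iff]
    exact ⟨h1, h2⟩
  · intro j hj
    rfl

/-- the Hankel matrix of the product of two FIRs factors as
`H_D = H_B · T · H_C`, where `H_B`, `H_C` are the zero-padded Hankel matrices of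
the factors, `H_D` the Hankel matrix of the product coefficients
`D_k = ∑_{i+j=k+1} B_i C_j`, and `T` the block anti-identity permutation. -/
theorem hankel_of_product
    (pb ρ mc n l : ℕ)
    (B : ℕ → Matrix (Fin pb) (Fin ρ) ℂ) (C : ℕ → Matrix (Fin ρ) (Fin mc) ℂ)
    (hB0 : B 0 = 0) (hBn : ∀ j, n < j → B j = 0)
    (hC0 : C 0 = 0) (hCl : ∀ j, l < j → C j = 0)
    (D : ℕ → Matrix (Fin pb) (Fin mc) ℂ)
    (hD : ∀ k, D k = ∑ i ∈ Finset.Icc 1 n, ∑ j ∈ Finset.Icc 1 l,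
      if i + j = k + 1 then B i * C j else 0)
    (HB : Matrix (Fin (n + l) × Fin pb) (Fin (n + l) × Fin ρ) ℂ)
    (hHB : ∀ (r s : Fin (n + l)) (a : Fin pb) (b : Fin ρ),
      HB (r, a) (s, b) = B (r.val + s.val + 1 - l) a b)
    (HC : Matrix (Fin (n + l) × Fin ρ) (Fin (n + l) × Fin mc) ℂ)
    (hHC : ∀ (r s : Fin (n + l)) (a : Fin ρ) (b : Fin mc),
      HC (r, a) (s, b) = C (r.val + s.val + 1 - n) a b)
    (HD : Matrix (Fin (n + l) × Fin pb) (Fin (n + l) × Fin mc) ℂ)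
    (hHD : ∀ (r s : Fin (n + l)) (a : Fin pb) (b : Fin mc),
      HD (r, a) (s, b) = D (r.val + s.val) a b)
    (T : Matrix (Fin (n + l) × Fin ρ) (Fin (n + l) × Fin ρ) ℂ)
    (hT : ∀ (i j : Fin (n + l)) (a b : Fin ρ),
      T (i, a) (j, b) = if i.val + j.val = n + l - 1 ∧ a = b then 1 else 0) :
    HD = HB * T * HC := by
  -- first compute HB * T
  have hrev : ∀ (r : Fin (n + l)) (a : Fin pb) (j : Fin (n + l)) (c : Fin ρ),
      (HB * T) (r, a) (j, c) = B (r.val + (n + l - 1 - j.val) + 1 - l) a c := by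
    intro r a j c
    rw [Matrix.mul_apply, Fintype.sum_prod_type]
    have key : ∀ i : Fin (n + l),
        ∑ e : Fin ρ, HB (r, a) (i, e) * T (i, e) (j, c)
          = if i.val + j.val = n + l - 1 then B (r.val + i.val + 1 - l) a c else 0 := by
      intro i
      simp only [hHB, hT, mul_ite, mul_one, mul_zero, ite_and]
      by_cases h : i.val + j.val = n + l - 1 <;> simp [h]
    simp only [key]
    rw [Finset.sum_eq_single (⟨n + l - 1 - j.val, by omega⟩ : Fin (n + l))]
    · rw [if_pos (show (n+l-1-j.val) + j.val = n+l-1 by have := j.isLt; omega)]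
    · intro i _ hne
      apply if_neg
      intro h
      exact hne (Fin.ext (show i.val = n+l-1-j.val by have := j.isLt; omega))
    · intro h
      exact absurd (Finset.mem_univ _) h
  ext ⟨r, a⟩ ⟨s, b⟩
  rw [hHD, hD, Matrix.mul_apply, Fintype.sum_prod_type]
  simp only [hrev, hHC]
  have step : ∀ j : Fin (n + l),
      ∑ c : Fin ρ, B (r.val + (n + l - 1 - j.val) + 1 - l) a c
          * C (j.val + s.val + 1 - n) c b
        = (B (r.val + n - j.val) * C (j.val + s.val + 1 - n)) a b := by
    intro j
    rw [Matrix.mul_apply]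
    have h1 := j.isLt
    have h2 : r.val + (n + l - 1 - j.val) + 1 - l = r.val + n - j.val := by omega
    rw [h2]
  simp only [step]
  rw [Fin.sum_univ_eq_sum_range
    (fun j => (B (r.val + n - j) * C (j + s.val + 1 - n)) a b) (n + l),
    ← Matrix.sum_apply,
    key_sum pb ρ mc n l B C hB0 hBn hC0 hCl r.val s.val r.isLt s.isLt]
end
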